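/- arXiv:2107.09171 — 2 statements merged into one kernel-verified Lean document; each statement's English description precedes it below -/
import Mathlib

section
/- The group with presentation ⟨x, y | x² = y³⟩ (the trefoil knot group) is non-abelian. -/
/-- The single relation x² = y³, i.e. x² y⁻³, in the free group on two generators. -/
def trefoilRels : Set (FreeGroup (Fin 2)) :=
  {FreeGroup.of 0 ^ 2 * (FreeGroup.of 1 ^ 3)⁻¹}

private def trefoilF : Fin 2 → Equiv.Perm (Fin 3) :=
  ![Equiv.swap 0 1, finRotate 3]

private lemma trefoil_closure :
    ∀ r ∈ trefoilRels, FreeGroup.lift trefoilF r = 1 := by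
  intro r hr
  rw [trefoilRels, Set.mem_singleton_iff] at hr
  subst hr
  simp only [map_mul, map_pow, map_inv, FreeGroup.lift_apply_of]
  decide

/-- The trefoil knot group ⟨x, y | x² = y³⟩ is non-abelian. -/
theorem trefoil_group_not_abelian :
    ¬ ∀ a b : PresentedGroup trefoilRels, a * b = b * a := by
  intro h
  have := h (PresentedGroup.of 0) (PresentedGroup.of 1)
  have h2 := congrArg (PresentedGroup.toGroup trefoil_closure) this
  simp only [map_mul, PresentedGroup.toGroup.of] at h2
  revert h2
  decide
end

section
/- The group ⟨x, y | x² = y³⟩ is not isomorphic to the group of integers ℤ. -/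
noncomputable def trefoilMap : Fin 2 → Equiv.Perm (Fin 3) :=
  ![Equiv.swap 0 1, finRotate 3]

lemma trefoil_rel_holds : ∀ r ∈ trefoilRels, FreeGroup.lift trefoilMap r = 1 := by
  intro r hr
  rcases hr with rfl
  simp [trefoilMap]
  decide

noncomputable def trefoilHom : PresentedGroup trefoilRels →* Equiv.Perm (Fin 3) :=
  PresentedGroup.toGroup trefoil_rel_holds

/-- The trefoil knot group ⟨x, y | x² = y³⟩ is not isomorphic to ℤ. -/
theorem trefoil_group_not_iso_int :
    ¬ Nonempty (PresentedGroup trefoilRels ≃* Multiplicative ℤ) := by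
  rintro ⟨e⟩
  have hcomm : ∀ a b : PresentedGroup trefoilRels, a * b = b * a := by
    intro a b
    apply e.injective
    simp [map_mul, mul_comm]
  have h : trefoilHom (PresentedGroup.of (rels := trefoilRels) 0 * PresentedGroup.of (rels := trefoilRels) 1) =
      trefoilHom (PresentedGroup.of (rels := trefoilRels) 1 * PresentedGroup.of (rels := trefoilRels) 0) :=
    congrArg _ (hcomm _ _)
  simp only [map_mul, trefoilHom, PresentedGroup.toGroup.of] at h
  have : (trefoilMap 0) * (trefoilMap 1) ≠ (trefoilMap 1) * (trefoilMap 0) := by decide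
  exact this h
end
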